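/- arXiv:2007.11684 — 4 statements merged into one kernel-verified Lean document; each statement's English description precedes it below -/
import Mathlib

section
/- Performance difference lemma: for any two stationary policies π and π', J(π') - J(π) = Σ_{s ∈ S} Σ_{a ∈ A} η_{π'}(s) (π'(s,a) - π(s,a)) Q_π(s,a), where η_{π'} is the discounted state occupancy measure of π' and Q_π is the state-action value function of π. -/
/-!
The difference `Δ = V' - V` satisfies the policy-evaluation equation of `π'` with reward
`g s = ∑ a, (π' s a - π s a) * Q s a`, i.e. `(1 - γ • M) *ᵥ Δ = g` for the transition matrix `M`
of `π'`, because `∑ a, π s a * Q s a = V s`. As `M` is row stochastic, `γ • M` has ℓ∞ operator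
norm `< 1`, so `(1 - γ • M)⁻¹ = ∑ t, γ ^ t • M ^ t` (Neumann series). Hence
`(1 - γ) * ρ ⬝ᵥ Δ = (1 - γ) • (ρ ᵥ* (1 - γ • M)⁻¹) ⬝ᵥ g = η' ⬝ᵥ g`.
-/

open Finset Matrix

theorem HasSum.matrix_vecMul {ι m n R : Type*} [Fintype m] [NonUnitalNonAssocSemiring R]
    [TopologicalSpace R] [ContinuousAdd R] [ContinuousMul R] {f : ι → Matrix m n R}
    {N : Matrix m n R} (hf : HasSum f N) (v : m → R) :
    HasSum (fun t => v ᵥ* f t) (v ᵥ* N) :=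
  (hf.map (⟨⟨(v ᵥ* ·), vecMul_zero v⟩, fun A B => vecMul_add A B v⟩ : Matrix m n R →+ (n → R))
    (continuous_const.matrix_vecMul continuous_id) :)

namespace Matrix

variable {n : Type*} [Fintype n] [DecidableEq n] {M : Matrix n n ℝ} {γ : ℝ}

section LinftyOp

attribute [local instance] Matrix.linftyOpNormedAddCommGroup Matrix.linftyOpNormedRing
  Matrix.linftyOpNormedAlgebra

theorem linfty_opNorm_smul_lt_one_of_mem_rowStochastic (hM : M ∈ rowStochastic ℝ n)
    (hγ : |γ| < 1) : ‖γ • M‖ < 1 := by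
  have hM1 : ‖M‖ ≤ 1 := by
    rw [linfty_opNorm_def, NNReal.coe_le_one, Finset.sup_le_iff]
    intro i _
    rw [← NNReal.coe_le_one, NNReal.coe_sum]
    simp only [coe_nnnorm, Real.norm_of_nonneg (nonneg_of_mem_rowStochastic hM),
      sum_row_of_mem_rowStochastic hM i, le_refl]
  calc ‖γ • M‖ ≤ ‖γ‖ * ‖M‖ := norm_smul_le γ M
    _ ≤ |γ| * 1 := by rw [Real.norm_eq_abs]; gcongr
    _ < 1 := by simpa using hγ

theorem hasSum_geometric_smul_inv_of_mem_rowStochastic (hM : M ∈ rowStochastic ℝ n)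
    (hγ : |γ| < 1) : HasSum (fun t : ℕ => γ ^ t • M ^ t) (1 - γ • M)⁻¹ := by
  have hlt := linfty_opNorm_smul_lt_one_of_mem_rowStochastic hM hγ
  rw [inv_eq_left_inv (geom_series_mul_neg _ hlt)]
  have hs := (summable_geometric_of_norm_lt_one hlt).hasSum
  simp only [smul_pow] at hs ⊢
  exact hs

theorem inv_mul_one_sub_smul_of_mem_rowStochastic (hM : M ∈ rowStochastic ℝ n)
    (hγ : |γ| < 1) : (1 - γ • M)⁻¹ * (1 - γ • M) = 1 := by
  have hlt := linfty_opNorm_smul_lt_one_of_mem_rowStochastic hM hγ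
  rw [inv_eq_left_inv (geom_series_mul_neg _ hlt), geom_series_mul_neg _ hlt]

end LinftyOp

theorem eq_inv_mulVec_of_eq_add_smul_mulVec (hM : M ∈ rowStochastic ℝ n) (hγ : |γ| < 1)
    {x g : n → ℝ} (hx : x = g + γ • (M *ᵥ x)) : x = (1 - γ • M)⁻¹ *ᵥ g := by
  have hg : (1 - γ • M) *ᵥ x = g := by
    rw [sub_mulVec, one_mulVec, smul_mulVec]
    exact sub_eq_iff_eq_add.2 hx
  rw [← hg, mulVec_mulVec, inv_mul_one_sub_smul_of_mem_rowStochastic hM hγ, one_mulVec]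

theorem tsum_pow_mul_vecMul_pow_apply (hM : M ∈ rowStochastic ℝ n) (hγ : |γ| < 1)
    (ρ : n → ℝ) (s : n) : ∑' t : ℕ, γ ^ t * (ρ ᵥ* M ^ t) s = (ρ ᵥ* (1 - γ • M)⁻¹) s := by
  have h := Pi.hasSum.1
    ((hasSum_geometric_smul_inv_of_mem_rowStochastic hM hγ).matrix_vecMul ρ) s
  simp only [vecMul_smul, Pi.smul_apply, smul_eq_mul] at h
  exact h.tsum_eq

end Matrix

section MDP

variable {S A : Type*} [Fintype S] [Fintype A]

def policyTransition (π : S → A → ℝ) (P : S → A → S → ℝ) : Matrix S S ℝ :=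
  Matrix.of fun s s' => ∑ a, π s a * P s a s'

theorem policyTransition_mem_rowStochastic [DecidableEq S] {π : S → A → ℝ}
    {P : S → A → S → ℝ} (hP : ∀ s a, P s a ∈ stdSimplex ℝ S)
    (hπ : ∀ s, π s ∈ stdSimplex ℝ A) : policyTransition π P ∈ rowStochastic ℝ S := by
  refine mem_rowStochastic_iff_sum.2 ⟨fun s s' => ?_, fun s => ?_⟩
  · exact sum_nonneg fun a _ => mul_nonneg ((hπ s).1 a) ((hP s a).1 s')
  · simp only [policyTransition, of_apply]
    rw [sum_comm]
    simp only [← mul_sum, (hP _ _).2, mul_one, (hπ s).2]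

variable {r : S → A → ℝ} {P : S → A → S → ℝ} {γ : ℝ} {V : S → ℝ} {Q : S → A → ℝ}

theorem sum_mul_actionValue_eq (hQ : ∀ s a, Q s a = r s a + γ * ∑ s', P s a s' * V s')
    (π : S → A → ℝ) (s : S) :
    ∑ a, π s a * Q s a = ∑ a, π s a * r s a + γ * (policyTransition π P *ᵥ V) s := by
  simp only [hQ, mul_add, sum_add_distrib, mulVec, dotProduct, policyTransition, of_apply,
    mul_sum, sum_mul]
  rw [sum_comm (γ := A)]
  congr 1
  refine sum_congr rfl fun s' _ => sum_congr rfl fun a _ => ?_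
  ring

theorem sub_eq_add_smul_policyTransition_mulVec {π π' : S → A → ℝ} {V' : S → ℝ}
    (hV : ∀ s, V s = ∑ a, π s a * r s a + γ * (policyTransition π P *ᵥ V) s)
    (hV' : ∀ s, V' s = ∑ a, π' s a * r s a + γ * (policyTransition π' P *ᵥ V') s)
    (hQ : ∀ s a, Q s a = r s a + γ * ∑ s', P s a s' * V s') :
    V' - V = (fun s => ∑ a, (π' s a - π s a) * Q s a)
      + γ • (policyTransition π' P *ᵥ (V' - V)) := by
  ext s
  have hdiff : ∑ a, (π' s a - π s a) * Q s a = ∑ a, π' s a * Q s a - ∑ a, π s a * Q s a := by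
    simp only [sub_mul, sum_sub_distrib]
  simp only [Pi.sub_apply, Pi.add_apply, Pi.smul_apply, smul_eq_mul, mulVec_sub, hdiff,
    sum_mul_actionValue_eq hQ]
  rw [hV' s, ← hV s]
  ring

end MDP

theorem performance_difference_lemma_general
    {S A : Type} [Fintype S] [Fintype A] [DecidableEq S]
    (r : S → A → ℝ) (P : S → A → S → ℝ)
    (hP : ∀ s a, P s a ∈ stdSimplex ℝ S)
    (γ : ℝ) (hγ : γ ∈ Set.Ioo (0 : ℝ) 1)
    (ρ : S → ℝ)
    (π π' : S → A → ℝ) (hπ' : ∀ s, π' s ∈ stdSimplex ℝ A)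
    (V V' : S → ℝ)
    (hV : ∀ s, V s = (∑ a, π s a * r s a) + γ * ∑ s', (∑ a, π s a * P s a s') * V s')
    (hV' : ∀ s, V' s = (∑ a, π' s a * r s a) + γ * ∑ s', (∑ a, π' s a * P s a s') * V' s')
    (Q : S → A → ℝ) (hQ : ∀ s a, Q s a = r s a + γ * ∑ s', P s a s' * V s')
    (η' : S → ℝ)
    (hη' : ∀ s, η' s = (1 - γ) *
      ∑' t : ℕ, γ ^ t * ((ρ ᵥ* (Matrix.of fun s₁ s₂ => ∑ a, π' s₁ a * P s₁ a s₂) ^ t) s)) :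
    ((1 - γ) * ∑ s, ρ s * V' s) - ((1 - γ) * ∑ s, ρ s * V s)
      = ∑ s, ∑ a, η' s * (π' s a - π s a) * Q s a := by
  set M := policyTransition π' P
  set g : S → ℝ := fun s => ∑ a, (π' s a - π s a) * Q s a
  have hM : M ∈ rowStochastic ℝ S := policyTransition_mem_rowStochastic hP hπ'
  have hγ' : |γ| < 1 := abs_lt.2 ⟨by linarith [hγ.1], hγ.2⟩
  have hΔ : V' - V = (1 - γ • M)⁻¹ *ᵥ g :=
    eq_inv_mulVec_of_eq_add_smul_mulVec hM hγ'
      (sub_eq_add_smul_policyTransition_mulVec hV hV' hQ)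
  have hη : η' = (1 - γ) • (ρ ᵥ* (1 - γ • M)⁻¹) :=
    funext fun s => by
      rw [hη' s, Pi.smul_apply, smul_eq_mul, ← tsum_pow_mul_vecMul_pow_apply hM hγ']; rfl
  calc ((1 - γ) * ∑ s, ρ s * V' s) - ((1 - γ) * ∑ s, ρ s * V s)
      = (1 - γ) * (ρ ⬝ᵥ (V' - V)) := by rw [dotProduct_sub]; simp only [dotProduct]; ring
    _ = η' ⬝ᵥ g := by rw [hΔ, dotProduct_mulVec, hη, smul_dotProduct, smul_eq_mul]
    _ = ∑ s, ∑ a, η' s * (π' s a - π s a) * Q s a := by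
      simp only [dotProduct, g, mul_sum, mul_assoc]

/-- Performance difference lemma:
J(π') - J(π) = Σ_s Σ_a η_{π'}(s) (π'(s,a) - π(s,a)) Q_π(s,a). -/
theorem performance_difference_lemma
    {S A : Type} [Fintype S] [Fintype A] [DecidableEq S] [Nonempty S] [Nonempty A]
    (r : S → A → ℝ) (P : S → A → S → ℝ)
    (hP : ∀ s a, P s a ∈ stdSimplex ℝ S)
    (γ : ℝ) (hγ : γ ∈ Set.Ioo (0 : ℝ) 1)
    (ρ : S → ℝ) (hρ : ρ ∈ stdSimplex ℝ S)
    (π π' : S → A → ℝ) (hπ : ∀ s, π s ∈ stdSimplex ℝ A) (hπ' : ∀ s, π' s ∈ stdSimplex ℝ A)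
    (V V' : S → ℝ)
    (hV : ∀ s, V s = (∑ a, π s a * r s a) + γ * ∑ s', (∑ a, π s a * P s a s') * V s')
    (hV' : ∀ s, V' s = (∑ a, π' s a * r s a) + γ * ∑ s', (∑ a, π' s a * P s a s') * V' s')
    (Q : S → A → ℝ) (hQ : ∀ s a, Q s a = r s a + γ * ∑ s', P s a s' * V s')
    (η' : S → ℝ)
    (hη' : ∀ s, η' s = (1 - γ) *
      ∑' t : ℕ, γ ^ t * ((ρ ᵥ* (Matrix.of fun s₁ s₂ => ∑ a, π' s₁ a * P s₁ a s₂) ^ t) s)) :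
    ((1 - γ) * ∑ s, ρ s * V' s) - ((1 - γ) * ∑ s, ρ s * V s)
      = ∑ s, ∑ a, η' s * (π' s a - π s a) * Q s a :=
  performance_difference_lemma_general r P hP γ hγ ρ π π' hπ' V V' hV hV' Q hQ η' hη'
end

section
/- Approximate Bellman equation for stationary points: suppose π_∞ ∈ Π_φ is a first-order stationary point of J on Π_φ, i.e., ⟨∇J(π_∞), π - π_∞⟩ ≤ 0 for all π ∈ Π_φ. Then E_{S∼η_{π_∞}}[V_{π_∞}(S)] = max_{π ∈ Π_φ} E_{S∼η_{π_∞}}[(T_π V_{π_∞})(S)]. -/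
open Finset

/-- Approximate Bellman equation for stationary points: if π_∞ ∈ Π_φ is a
first-order stationary point of J on Π_φ, then
E_{S∼η_{π_∞}}[V_{π_∞}(S)] = max_{π ∈ Π_φ} E_{S∼η_{π_∞}}[(T_π V_{π_∞})(S)]. -/
theorem approximate_bellman_equation_for_stationary_points
    {S A : Type} [Fintype S] [Fintype A] [Nonempty S] [Nonempty A]
    (r : S → A → ℝ) (P : S → A → S → ℝ)
    (hP : ∀ s a, P s a ∈ stdSimplex ℝ S)
    (γ : ℝ) (hγ : γ ∈ Set.Ioo (0 : ℝ) 1)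
    {m : ℕ} (φ : S → Fin m)
    (πinf : S → A → ℝ) (hπinf : ∀ s, πinf s ∈ stdSimplex ℝ A)
    (hπinfAgg : ∀ s s' : S, φ s = φ s' → πinf s = πinf s')
    (V : S → ℝ)
    -- V = T_{π_∞} V
    (hV : ∀ s, V s = (∑ a, πinf s a * r s a) + γ * ∑ s', (∑ a, πinf s a * P s a s') * V s')
    (Q : S → A → ℝ) (hQ : ∀ s a, Q s a = r s a + γ * ∑ s', P s a s' * V s')
    (η : S → ℝ) (hη : ∀ s, 0 ≤ η s)
    -- the gradient of J at π_∞, represented via the policy gradient theorem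
    (D : (S → A → ℝ) →L[ℝ] ℝ)
    (hPG : ∀ π' : S → A → ℝ, (∀ s, π' s ∈ stdSimplex ℝ A) →
      D (π' - πinf) = ∑ s, ∑ a, η s * Q s a * (π' s a - πinf s a))
    -- first-order stationarity on Π_φ
    (hstat : ∀ π : S → A → ℝ, (∀ s, π s ∈ stdSimplex ℝ A) →
      (∀ s s' : S, φ s = φ s' → π s = π s') → D (π - πinf) ≤ 0) :
    IsGreatest {x : ℝ | ∃ π : S → A → ℝ, (∀ s, π s ∈ stdSimplex ℝ A) ∧
        (∀ s s' : S, φ s = φ s' → π s = π s') ∧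
        x = ∑ s, η s * ((∑ a, π s a * r s a) + γ * ∑ s', (∑ a, π s a * P s a s') * V s')}
      (∑ s, η s * V s) := by

  have key : ∀ π : S → A → ℝ, ∀ s : S,
      ∑ a, π s a * Q s a
        = (∑ a, π s a * r s a) + γ * ∑ s', (∑ a, π s a * P s a s') * V s' := by
    intro π s
    simp only [hQ, mul_add, Finset.sum_add_distrib]
    congr 1
    simp only [Finset.mul_sum, Finset.sum_mul]
    rw [Finset.sum_comm]
    exact Finset.sum_congr rfl fun _ _ => Finset.sum_congr rfl fun _ _ => by ring
  have hVQ : ∀ s, V s = ∑ a, πinf s a * Q s a := by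
    intro s; rw [key, ← hV]
  constructor
  · exact ⟨πinf, hπinf, hπinfAgg, by simp only [← hV]⟩
  · rintro x ⟨π, hsimp, hagg, rfl⟩
    have h1 : ∑ s, η s * ((∑ a, π s a * r s a) + γ * ∑ s', (∑ a, π s a * P s a s') * V s')
        - ∑ s, η s * V s = D (π - πinf) := by
      rw [hPG π hsimp, ← Finset.sum_sub_distrib]
      congr 1; ext s
      rw [← key, hVQ, Finset.mul_sum, Finset.mul_sum, ← Finset.sum_sub_distrib]
      exact Finset.sum_congr rfl fun _ _ => by ring
    have h2 := hstat π hsimp hagg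
    linarith [h1 ▸ h2]
end

section
/- Quality of stationary points: assume ρ(φ^{-1}(i)) > 0 for each segment i ∈ {1,…,m}, and let ε_φ be the inherent state aggregation error (the smallest ε such that |Q_π(s,a) - Q_π(s',a)| ≤ ε for all π ∈ Π_φ, all a, and all s,s' with φ(s)=φ(s')). If π_∞ is a first-order stationary point of J on Π_φ, then (1-γ)‖V^* - V_{π_∞}‖_∞ ≤ 2ε_φ, and hence J(π^*) - J(π_∞) ≤ 2ε_φ. -/
open Finset Matrix

/-- Quality of stationary points: if ρ puts positive mass on every segment and
π_∞ is a first-order stationary point of J on Π_φ, then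
(1-γ)‖V* - V_{π_∞}‖_∞ ≤ 2ε_φ and hence J(π*) - J(π_∞) ≤ 2ε_φ. -/
theorem quality_of_stationary_points
    {S A : Type} [Fintype S] [Fintype A] [DecidableEq S] [Nonempty S] [Nonempty A]
    (r : S → A → ℝ) (P : S → A → S → ℝ)
    (hP : ∀ s a, P s a ∈ stdSimplex ℝ S)
    (γ : ℝ) (hγ : γ ∈ Set.Ioo (0 : ℝ) 1)
    (ρ : S → ℝ) (hρ : ρ ∈ stdSimplex ℝ S)
    {m : ℕ} (φ : S → Fin m)
    -- every segment has positive probability under ρ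
    (hseg : ∀ i : Fin m, 0 < ∑ s ∈ Finset.univ.filter (fun s => φ s = i), ρ s)
    -- value functions of all state-aggregated policies
    (Vof : (S → A → ℝ) → (S → ℝ))
    (hVof : ∀ π : S → A → ℝ, (∀ s, π s ∈ stdSimplex ℝ A) →
      (∀ s s' : S, φ s = φ s' → π s = π s') →
      ∀ s, Vof π s = (∑ a, π s a * r s a) +
        γ * ∑ s', (∑ a, π s a * P s a s') * Vof π s')
    -- inherent state aggregation error ε_φ
    (ε : ℝ)
    (hε : ∀ π : S → A → ℝ, (∀ s, π s ∈ stdSimplex ℝ A) →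
      (∀ s s' : S, φ s = φ s' → π s = π s') →
      ∀ a : A, ∀ s s' : S, φ s = φ s' →
        |(r s a + γ * ∑ s₂, P s a s₂ * Vof π s₂)
          - (r s' a + γ * ∑ s₂, P s' a s₂ * Vof π s₂)| ≤ ε)
    -- the stationary point π_∞ ∈ Π_φ
    (πinf : S → A → ℝ) (hπinf : ∀ s, πinf s ∈ stdSimplex ℝ A)
    (hπinfAgg : ∀ s s' : S, φ s = φ s' → πinf s = πinf s')
    -- its occupancy measure
    (η : S → ℝ)
    (hη : ∀ s, η s = (1 - γ) *
      ∑' t : ℕ, γ ^ t * ((ρ ᵥ* (Matrix.of fun s₁ s₂ => ∑ a, πinf s₁ a * P s₁ a s₂) ^ t) s))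
    -- the gradient of J at π_∞, represented via the policy gradient theorem
    (D : (S → A → ℝ) →L[ℝ] ℝ)
    (hPG : ∀ π' : S → A → ℝ, (∀ s, π' s ∈ stdSimplex ℝ A) →
      D (π' - πinf) = ∑ s, ∑ a,
        η s * (r s a + γ * ∑ s₂, P s a s₂ * Vof πinf s₂) * (π' s a - πinf s a))
    -- first-order stationarity on Π_φ
    (hstat : ∀ π : S → A → ℝ, (∀ s, π s ∈ stdSimplex ℝ A) →
      (∀ s s' : S, φ s = φ s' → π s = π s') → D (π - πinf) ≤ 0)
    -- the optimal value function V* (fixed point of the Bellman optimality operator)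
    (Vstar : S → ℝ)
    (hVstar : ∀ s, Vstar s = Finset.univ.sup' Finset.univ_nonempty
      (fun a : A => r s a + γ * ∑ s', P s a s' * Vstar s')) :
    (1 - γ) * ‖Vstar - Vof πinf‖ ≤ 2 * ε ∧
    ((1 - γ) * ∑ s, ρ s * Vstar s) - ((1 - γ) * ∑ s, ρ s * Vof πinf s) ≤ 2 * ε := by
  obtain ⟨hγ0, hγ1⟩ := hγ
  have h1γ : (0:ℝ) < 1 - γ := by linarith
  set V : S → ℝ := Vof πinf with hVdef
  set Q : S → A → ℝ := fun s a => r s a + γ * ∑ s₂, P s a s₂ * V s₂ with hQdef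
  have hπnn : ∀ s a, 0 ≤ πinf s a := fun s a => (hπinf s).1 a
  have hπsum : ∀ s, ∑ a, πinf s a = 1 := fun s => (hπinf s).2
  have hPnn : ∀ s a s', 0 ≤ P s a s' := fun s a s' => (hP s a).1 s'
  have hPsum : ∀ s a, ∑ s', P s a s' = 1 := fun s a => (hP s a).2
  have hρnn : ∀ s, 0 ≤ ρ s := hρ.1
  have hρsum : ∑ s, ρ s = 1 := hρ.2
  have hεnn : 0 ≤ ε := by
    have := hε πinf hπinf hπinfAgg (Classical.arbitrary A)
      (Classical.arbitrary S) (Classical.arbitrary S) rfl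
    simpa using (abs_nonneg _).trans this
  -- V in terms of Q
  have hV : ∀ s, V s = ∑ a, πinf s a * Q s a := by
    intro s
    have hBell : V s = (∑ a, πinf s a * r s a) +
        γ * ∑ s', (∑ a, πinf s a * P s a s') * V s' := hVof πinf hπinf hπinfAgg s
    have hsplit : ∑ a, πinf s a * Q s a = (∑ a, πinf s a * r s a) +
        γ * ∑ s', (∑ a, πinf s a * P s a s') * V s' := by
      simp only [hQdef, mul_add, Finset.sum_add_distrib]
      congr 1
      calc ∑ a, πinf s a * (γ * ∑ s₂, P s a s₂ * V s₂)
          = ∑ a, ∑ s₂, πinf s a * (γ * (P s a s₂ * V s₂)) := by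
            apply Finset.sum_congr rfl; intro a _
            rw [Finset.mul_sum, Finset.mul_sum]
        _ = ∑ s₂, ∑ a, πinf s a * (γ * (P s a s₂ * V s₂)) := Finset.sum_comm
        _ = γ * ∑ s', (∑ a, πinf s a * P s a s') * V s' := by
            rw [Finset.mul_sum]
            apply Finset.sum_congr rfl; intro s₂ _
            rw [Finset.sum_mul, Finset.mul_sum]
            apply Finset.sum_congr rfl; intro a _; ring
    rw [hsplit]; exact hBell
  -- the transition matrix and its powers
  set M : Matrix S S ℝ := Matrix.of fun s₁ s₂ => ∑ a, πinf s₁ a * P s₁ a s₂ with hMdef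
  have hstoch : ∀ t : ℕ, (∀ s, 0 ≤ (ρ ᵥ* M ^ t) s) ∧ (∑ s, (ρ ᵥ* M ^ t) s) = 1 := by
    intro t
    induction t with
    | zero => simp [Matrix.vecMul_one, hρnn, hρsum]
    | succ t ih =>
      have hrw : ρ ᵥ* M ^ (t+1) = (ρ ᵥ* M ^ t) ᵥ* M := by
        rw [pow_succ, Matrix.vecMul_vecMul]
      have hentry : ∀ j, ((ρ ᵥ* M ^ t) ᵥ* M) j = ∑ i, (ρ ᵥ* M ^ t) i * M i j := by
        intro j; simp [Matrix.vecMul, dotProduct]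
      have hMnn : ∀ i j, 0 ≤ M i j := by
        intro i j
        exact Finset.sum_nonneg fun a _ => mul_nonneg (hπnn i a) (hPnn i a j)
      have hMrow : ∀ i, ∑ j, M i j = 1 := by
        intro i
        rw [hMdef]
        simp only [Matrix.of_apply]
        rw [Finset.sum_comm]
        calc ∑ a, ∑ j, πinf i a * P i a j = ∑ a, πinf i a := by
              apply Finset.sum_congr rfl; intro a _
              rw [← Finset.mul_sum, hPsum, mul_one]
          _ = 1 := hπsum i
      constructor
      · intro s
        rw [hrw, hentry]
        exact Finset.sum_nonneg fun i _ => mul_nonneg (ih.1 i) (hMnn i s)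
      · rw [hrw]
        calc ∑ s, ((ρ ᵥ* M ^ t) ᵥ* M) s = ∑ s, ∑ i, (ρ ᵥ* M ^ t) i * M i s := by
              apply Finset.sum_congr rfl; intro s _; exact hentry s
          _ = ∑ i, (ρ ᵥ* M ^ t) i * ∑ s, M i s := by
              rw [Finset.sum_comm]; apply Finset.sum_congr rfl; intro i _
              rw [Finset.mul_sum]
          _ = 1 := by
              simp only [hMrow, mul_one]; exact ih.2
  -- η is nonnegative and dominates (1-γ)ρ
  have hsummable : ∀ s, Summable (fun t : ℕ => γ ^ t * (ρ ᵥ* M ^ t) s) := by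
    intro s
    apply Summable.of_nonneg_of_le (g := fun t => γ ^ t * (ρ ᵥ* M ^ t) s)
      (f := fun t => γ ^ t)
    · intro t; exact mul_nonneg (pow_nonneg hγ0.le t) ((hstoch t).1 s)
    · intro t
      have hle : (ρ ᵥ* M ^ t) s ≤ 1 := by
        rw [← (hstoch t).2]
        exact Finset.single_le_sum (fun i _ => (hstoch t).1 i) (Finset.mem_univ s)
      calc γ ^ t * (ρ ᵥ* M ^ t) s ≤ γ ^ t * 1 :=
            mul_le_mul_of_nonneg_left hle (pow_nonneg hγ0.le t)
        _ = γ ^ t := mul_one _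
    · exact summable_geometric_of_lt_one hγ0.le hγ1
  have hηnn : ∀ s, 0 ≤ η s := by
    intro s; rw [hη s]
    apply mul_nonneg h1γ.le
    exact tsum_nonneg fun t => mul_nonneg (pow_nonneg hγ0.le t) ((hstoch t).1 s)
  have hηρ : ∀ s, (1 - γ) * ρ s ≤ η s := by
    intro s; rw [hη s]
    apply mul_le_mul_of_nonneg_left _ h1γ.le
    have := Summable.le_tsum (hsummable s) 0
      (fun j _ => mul_nonneg (pow_nonneg hγ0.le j) ((hstoch j).1 s))
    simpa [Matrix.vecMul_one] using this
  have hηseg : ∀ i : Fin m, 0 < ∑ s ∈ Finset.univ.filter (fun s => φ s = i), η s := by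
    intro i
    calc (0:ℝ) < (1 - γ) * ∑ s ∈ Finset.univ.filter (fun s => φ s = i), ρ s :=
          mul_pos h1γ (hseg i)
      _ = ∑ s ∈ Finset.univ.filter (fun s => φ s = i), (1 - γ) * ρ s := by
          rw [Finset.mul_sum]
      _ ≤ ∑ s ∈ Finset.univ.filter (fun s => φ s = i), η s :=
          Finset.sum_le_sum fun s _ => hηρ s
  -- key stationarity consequence, per segment and action
  have hkey : ∀ (i : Fin m) (a : A),
      ∑ s ∈ Finset.univ.filter (fun s => φ s = i), η s * (Q s a - V s) ≤ 0 := by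
    intro i a
    classical
    set π : S → A → ℝ := fun s a' => if φ s = i then (if a' = a then 1 else 0) else πinf s a'
      with hπdef
    have hπs : ∀ s, π s ∈ stdSimplex ℝ A := by
      intro s
      constructor
      · intro a'; simp only [hπdef]
        split
        · split <;> norm_num
        · exact hπnn s a'
      · simp only [hπdef]
        split
        · simp
        · exact hπsum s
    have hπagg : ∀ s s' : S, φ s = φ s' → π s = π s' := by
      intro s s' h
      funext a'
      simp only [hπdef, h]
      split
      · rfl
      · rw [hπinfAgg s s' h]
    have hd := hstat π hπs hπagg
    rw [hPG π hπs] at hd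
    have heq : ∑ s, ∑ a', η s * (r s a' + γ * ∑ s₂, P s a' s₂ * Vof πinf s₂)
          * (π s a' - πinf s a')
        = ∑ s ∈ Finset.univ.filter (fun s => φ s = i), η s * (Q s a - V s) := by
      rw [← Finset.sum_filter_add_sum_filter_not Finset.univ (fun s => φ s = i)]
      have hz : ∑ s ∈ Finset.univ.filter (fun s => ¬ φ s = i),
          ∑ a', η s * (r s a' + γ * ∑ s₂, P s a' s₂ * Vof πinf s₂) * (π s a' - πinf s a')
          = 0 := by
        apply Finset.sum_eq_zero
        intro s hs
        rw [Finset.mem_filter] at hs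
        apply Finset.sum_eq_zero
        intro a' _
        simp [hπdef, hs.2]
      rw [hz, add_zero]
      apply Finset.sum_congr rfl
      intro s hs
      rw [Finset.mem_filter] at hs
      have : ∀ a', η s * (r s a' + γ * ∑ s₂, P s a' s₂ * Vof πinf s₂) * (π s a' - πinf s a')
          = η s * ((if a' = a then 1 else 0) * Q s a') - η s * (πinf s a' * Q s a') := by
        intro a'
        simp only [hπdef, hs.2, if_true, hQdef]
        ring
      rw [Finset.sum_congr rfl fun a' _ => this a']
      rw [Finset.sum_sub_distrib, ← Finset.mul_sum, ← Finset.mul_sum]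
      have h1 : ∑ a', (if a' = a then (1:ℝ) else 0) * Q s a' = Q s a := by
        simp
      rw [h1, ← hV s, mul_sub]
    rw [heq] at hd
    exact hd
  -- Q s a ≤ V s + 2ε for all s, a
  have hQV : ∀ s a, Q s a ≤ V s + 2 * ε := by
    intro s₀ a
    set i := φ s₀ with hidef
    have hsum := hkey i a
    have hterm : ∀ s ∈ Finset.univ.filter (fun s => φ s = i),
        η s * (Q s₀ a - V s₀ - 2 * ε) ≤ η s * (Q s a - V s) := by
      intro s hs
      rw [Finset.mem_filter] at hs
      have hφ : φ s₀ = φ s := hs.2.symm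
      apply mul_le_mul_of_nonneg_left _ (hηnn s)
      have hQdiff : ∀ a', Q s₀ a' - Q s a' ≤ ε ∧ Q s a' - Q s₀ a' ≤ ε := by
        intro a'
        have := hε πinf hπinf hπinfAgg a' s₀ s hφ
        rw [abs_le] at this
        constructor <;> [skip; skip] <;> simp only [hQdef] <;> linarith [this.1, this.2]
      have hVdiff : V s - V s₀ ≤ ε := by
        have hps : πinf s₀ = πinf s := hπinfAgg s₀ s hφ
        have : V s - V s₀ = ∑ a', πinf s a' * (Q s a' - Q s₀ a') := by
          rw [hV s, hV s₀, hps]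
          rw [← Finset.sum_sub_distrib]
          apply Finset.sum_congr rfl; intro a' _; ring
        rw [this]
        calc ∑ a', πinf s a' * (Q s a' - Q s₀ a') ≤ ∑ a', πinf s a' * ε :=
              Finset.sum_le_sum fun a' _ =>
                mul_le_mul_of_nonneg_left (hQdiff a').2 (hπnn s a')
          _ = ε := by rw [← Finset.sum_mul, hπsum, one_mul]
      linarith [(hQdiff a).1]
    have h2 : (Q s₀ a - V s₀ - 2 * ε) * ∑ s ∈ Finset.univ.filter (fun s => φ s = i), η s
        ≤ 0 := by
      calc (Q s₀ a - V s₀ - 2 * ε) * ∑ s ∈ Finset.univ.filter (fun s => φ s = i), η s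
          = ∑ s ∈ Finset.univ.filter (fun s => φ s = i), η s * (Q s₀ a - V s₀ - 2 * ε) := by
            rw [Finset.mul_sum]; apply Finset.sum_congr rfl; intro s _; ring
        _ ≤ ∑ s ∈ Finset.univ.filter (fun s => φ s = i), η s * (Q s a - V s) :=
            Finset.sum_le_sum hterm
        _ ≤ 0 := hsum
    nlinarith [hηseg i, h2]
  -- V ≤ Vstar pointwise
  have hVle : ∀ s, V s ≤ Vstar s := by
    obtain ⟨s₀, _, hs₀⟩ := Finset.exists_max_image Finset.univ (fun s => V s - Vstar s)
      Finset.univ_nonempty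
    have hg : ∀ s, V s - Vstar s ≤ V s₀ - Vstar s₀ := fun s => hs₀ s (Finset.mem_univ s)
    have hQle : ∀ a, Q s₀ a ≤ Vstar s₀ + γ * (V s₀ - Vstar s₀) := by
      intro a
      have h1 : r s₀ a + γ * ∑ s', P s₀ a s' * Vstar s' ≤ Vstar s₀ := by
        rw [hVstar s₀]
        exact Finset.le_sup' (fun a : A => r s₀ a + γ * ∑ s', P s₀ a s' * Vstar s')
          (Finset.mem_univ a)
      have h2 : ∑ s', P s₀ a s' * V s' ≤ (∑ s', P s₀ a s' * Vstar s') + (V s₀ - Vstar s₀) := by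
        have : ∑ s', P s₀ a s' * V s' ≤ ∑ s', P s₀ a s' * (Vstar s' + (V s₀ - Vstar s₀)) :=
          Finset.sum_le_sum fun s' _ =>
            mul_le_mul_of_nonneg_left (by linarith [hg s']) (hPnn s₀ a s')
        calc ∑ s', P s₀ a s' * V s' ≤ ∑ s', P s₀ a s' * (Vstar s' + (V s₀ - Vstar s₀)) := this
          _ = (∑ s', P s₀ a s' * Vstar s') + (∑ s', P s₀ a s') * (V s₀ - Vstar s₀) := by
              rw [Finset.sum_mul, ← Finset.sum_add_distrib]
              apply Finset.sum_congr rfl; intro s' _; ring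
          _ = (∑ s', P s₀ a s' * Vstar s') + (V s₀ - Vstar s₀) := by
              rw [hPsum, one_mul]
      have h2' := mul_le_mul_of_nonneg_left h2 hγ0.le
      simp only [hQdef]
      linarith [h1, h2']
    have hVs₀ : V s₀ ≤ Vstar s₀ + γ * (V s₀ - Vstar s₀) := by
      calc V s₀ = ∑ a, πinf s₀ a * Q s₀ a := hV s₀
        _ ≤ ∑ a, πinf s₀ a * (Vstar s₀ + γ * (V s₀ - Vstar s₀)) :=
            Finset.sum_le_sum fun a _ => mul_le_mul_of_nonneg_left (hQle a) (hπnn s₀ a)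
        _ = Vstar s₀ + γ * (V s₀ - Vstar s₀) := by
            rw [← Finset.sum_mul, hπsum, one_mul]
    have hneg : V s₀ - Vstar s₀ ≤ 0 := by nlinarith
    intro s; linarith [hg s, hneg]
  -- (1-γ)(Vstar s - V s) ≤ 2ε for all s
  have hgap : ∀ s, (1 - γ) * (Vstar s - V s) ≤ 2 * ε := by
    obtain ⟨s₁, _, hs₁⟩ := Finset.exists_max_image Finset.univ (fun s => Vstar s - V s)
      Finset.univ_nonempty
    have hN : ∀ s, Vstar s - V s ≤ Vstar s₁ - V s₁ := fun s => hs₁ s (Finset.mem_univ s)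
    obtain ⟨a, _, ha⟩ := Finset.exists_mem_eq_sup' (Finset.univ_nonempty (α := A))
      (fun a : A => r s₁ a + γ * ∑ s', P s₁ a s' * Vstar s')
    have hVs₁ : Vstar s₁ = r s₁ a + γ * ∑ s', P s₁ a s' * Vstar s' := by
      rw [hVstar s₁]; exact ha
    have h2 : ∑ s', P s₁ a s' * Vstar s' ≤ (∑ s', P s₁ a s' * V s') + (Vstar s₁ - V s₁) := by
      calc ∑ s', P s₁ a s' * Vstar s' ≤ ∑ s', P s₁ a s' * (V s' + (Vstar s₁ - V s₁)) :=
            Finset.sum_le_sum fun s' _ =>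
              mul_le_mul_of_nonneg_left (by linarith [hN s']) (hPnn s₁ a s')
        _ = (∑ s', P s₁ a s' * V s') + (∑ s', P s₁ a s') * (Vstar s₁ - V s₁) := by
            rw [Finset.sum_mul, ← Finset.sum_add_distrib]
            apply Finset.sum_congr rfl; intro s' _; ring
        _ = (∑ s', P s₁ a s' * V s') + (Vstar s₁ - V s₁) := by rw [hPsum, one_mul]
    have hQs₁ : Vstar s₁ ≤ Q s₁ a + γ * (Vstar s₁ - V s₁) := by
      have h2' := mul_le_mul_of_nonneg_left h2 hγ0.le
      rw [mul_add] at h2'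
      simp only [hQdef]
      linarith [hVs₁, h2']
    have hNbound : (1 - γ) * (Vstar s₁ - V s₁) ≤ 2 * ε := by
      have := hQV s₁ a
      nlinarith
    intro s
    have h3 : Vstar s - V s ≤ Vstar s₁ - V s₁ := hN s
    nlinarith [hNbound, h3, h1γ]
  -- conclude
  have hnorm : (1 - γ) * ‖Vstar - V‖ ≤ 2 * ε := by
    have hb : ‖Vstar - V‖ ≤ 2 * ε / (1 - γ) := by
      rw [pi_norm_le_iff_of_nonneg (by positivity)]
      intro s
      have h0 : 0 ≤ Vstar s - V s := by linarith [hVle s]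
      have h1 : Vstar s - V s ≤ 2 * ε / (1 - γ) := by
        rw [le_div_iff₀ h1γ]
        nlinarith [hgap s]
      simp only [Pi.sub_apply, Real.norm_eq_abs]
      rw [abs_of_nonneg h0]
      exact h1
    calc (1 - γ) * ‖Vstar - V‖ ≤ (1 - γ) * (2 * ε / (1 - γ)) :=
          mul_le_mul_of_nonneg_left hb h1γ.le
      _ = 2 * ε := by field_simp
  refine ⟨hnorm, ?_⟩
  have : (1 - γ) * ∑ s, ρ s * Vstar s - (1 - γ) * ∑ s, ρ s * V s
      = ∑ s, ρ s * ((1 - γ) * (Vstar s - V s)) := by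
    rw [← mul_sub, ← Finset.sum_sub_distrib, Finset.mul_sum]
    apply Finset.sum_congr rfl; intro s _; ring
  rw [this]
  calc ∑ s, ρ s * ((1 - γ) * (Vstar s - V s)) ≤ ∑ s, ρ s * (2 * ε) :=
        Finset.sum_le_sum fun s _ => mul_le_mul_of_nonneg_left (hgap s) (hρnn s)
    _ = 2 * ε := by rw [← Finset.sum_mul, hρsum, one_mul]
end

section
/- Projection onto the probability simplex via soft thresholding: for y ∈ ℝ^k, let μ be y sorted in decreasing order, J = max{ j ∈ {1,…,k} : μ_j - (1/j)(Σ_{r=1}^j μ_r - 1) > 0 }, and β = (1/J)(Σ_{i=1}^J μ_i - 1). Then the vector ŷ with ŷ_i = max{y_i - β, 0} is the Euclidean projection of y onto the simplex Δ_k = {x ∈ ℝ^k : x ≥ 0, Σ_i x_i = 1}, i.e., ŷ = argmin_{x ∈ Δ_k} ‖x - y‖_2². -/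
open Finset

/-!
With `t = y - β`, the vector `ŷ = max t 0` satisfies `(x_i - ŷ_i) (ŷ_i - t_i) ≥ 0` for every
`x_i ≥ 0`. If moreover `∑ ŷ_i = 1 = ∑ x_i`, the shift by `β` disappears on summing, which gives
the variational inequality `⟪x - ŷ, ŷ - y⟫ ≥ 0` and hence `‖x - y‖² ≥ ‖ŷ - y‖²` on the simplex.

It remains to see that `∑ ŷ_i = 1`. Writing `β_j = (μ_1 + ⋯ + μ_j - 1) / j`, the index `J` is
active (`μ_J > β_J`) while `J + 1` is not, and `μ_{J+1} ≤ β_{J+1}` is equivalent to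
`μ_{J+1} ≤ β_J`. By monotonicity the entries exceeding `β = β_J` are exactly `μ_1, …, μ_J`, so
`∑ ŷ_i = μ_1 + ⋯ + μ_J - J β_J = 1`.
-/

section Projection

variable {ι : Type*} [Fintype ι]

theorem sum_sq_sub_le_of_sum_mul_nonneg (p x y : ι → ℝ)
    (h : 0 ≤ ∑ i, (x i - p i) * (p i - y i)) :
    ∑ i, (p i - y i) ^ 2 ≤ ∑ i, (x i - y i) ^ 2 := by
  have hexpand : ∑ i, (x i - y i) ^ 2 = ∑ i, (x i - p i) ^ 2
      + 2 * ∑ i, (x i - p i) * (p i - y i) + ∑ i, (p i - y i) ^ 2 := by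
    simp only [mul_sum, ← sum_add_distrib]
    exact sum_congr rfl fun i _ => by ring
  have hsq : 0 ≤ ∑ i, (x i - p i) ^ 2 := sum_nonneg fun i _ => sq_nonneg _
  linarith

theorem mul_sub_max_sub_nonneg {x t : ℝ} (hx : 0 ≤ x) : 0 ≤ (x - max t 0) * (max t 0 - t) := by
  rcases le_total 0 t with ht | ht
  · simp [max_eq_left ht]
  · rw [max_eq_right ht]
    nlinarith

theorem sum_sq_max_sub_sub_le {y : ι → ℝ} {β : ℝ} (hβ : ∑ i, max (y i - β) 0 = 1)
    {x : ι → ℝ} (hx : x ∈ stdSimplex ℝ ι) :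
    ∑ i, (max (y i - β) 0 - y i) ^ 2 ≤ ∑ i, (x i - y i) ^ 2 := by
  set p : ι → ℝ := fun i => max (y i - β) 0
  apply sum_sq_sub_le_of_sum_mul_nonneg p x y
  have hshift : ∑ i, (x i - p i) * (p i - y i)
      = ∑ i, (x i - p i) * (p i - (y i - β)) - β * ∑ i, (x i - p i) := by
    rw [mul_sum, ← sum_sub_distrib]
    exact sum_congr rfl fun i _ => by ring
  rw [hshift, sum_sub_distrib, hx.2, hβ, sub_self, mul_zero, sub_zero]
  exact sum_nonneg fun i _ => mul_sub_max_sub_nonneg (hx.1 i)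

end Projection

theorem sum_comp_eq_sum_Icc_of_perm {α M : Type*} [AddCommMonoid M] {k : ℕ} {y : Fin k → α}
    {μ : ℕ → α} (σ : Equiv.Perm (Fin k)) (hsort : ∀ i : Fin k, μ ((i : ℕ) + 1) = y (σ i))
    (g : α → M) : ∑ i, g (y i) = ∑ j ∈ Icc 1 k, g (μ j) := by
  rw [← Equiv.sum_comp σ (fun i => g (y i))]
  simp only [← hsort]
  rw [Fin.sum_univ_eq_sum_range (fun i => g (μ (i + 1))), range_eq_Ico,
    sum_Ico_add' (fun j => g (μ j)), zero_add, Ico_add_one_right_eq_Icc]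

section Threshold

variable {μ : ℕ → ℝ} {k J : ℕ}

noncomputable def simplexThreshold (μ : ℕ → ℝ) (j : ℕ) : ℝ :=
  1 / (j : ℝ) * ((∑ r ∈ Icc 1 j, μ r) - 1)

theorem mul_simplexThreshold {j : ℕ} (hj : 0 < j) :
    j * simplexThreshold μ j = ∑ r ∈ Icc 1 j, μ r - 1 := by
  have : (j : ℝ) ≠ 0 := by positivity
  rw [simplexThreshold]
  field_simp

theorem le_simplexThreshold_of_succ (hJ : 0 < J)
    (h : μ (J + 1) - simplexThreshold μ (J + 1) ≤ 0) : μ (J + 1) ≤ simplexThreshold μ J := by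
  have hmulJ := mul_simplexThreshold (μ := μ) hJ
  have hsucc := mul_simplexThreshold (μ := μ) J.succ_pos
  rw [sum_Icc_succ_top (by omega), Nat.cast_succ] at hsucc
  have hmul : (J : ℝ) * μ (J + 1) ≤ J * simplexThreshold μ J := by nlinarith
  exact le_of_mul_le_mul_left hmul (by exact_mod_cast hJ)

def activeIndices (μ : ℕ → ℝ) (k : ℕ) : Set ℕ :=
  {j | 1 ≤ j ∧ j ≤ k ∧ 0 < μ j - simplexThreshold μ j}

theorem simplexThreshold_lt_of_le (hμ : AntitoneOn μ (Set.Icc 1 k))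
    (hJ : IsGreatest (activeIndices μ k) J) {j : ℕ} (hj : 1 ≤ j) (hjJ : j ≤ J) :
    simplexThreshold μ J < μ j := by
  obtain ⟨hJ1, hJk, hJpos⟩ := hJ.1
  calc simplexThreshold μ J < μ J := sub_pos.mp hJpos
    _ ≤ μ j := hμ ⟨hj, hjJ.trans hJk⟩ ⟨hJ1, hJk⟩ hjJ

theorem le_simplexThreshold_of_lt (hμ : AntitoneOn μ (Set.Icc 1 k))
    (hJ : IsGreatest (activeIndices μ k) J) {j : ℕ} (hJj : J < j) (hjk : j ≤ k) :
    μ j ≤ simplexThreshold μ J := by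
  have hJ1 : 1 ≤ J := hJ.1.1
  have hinactive : J + 1 ∉ activeIndices μ k := fun h => by have := hJ.2 h; omega
  have hsucc : μ (J + 1) - simplexThreshold μ (J + 1) ≤ 0 :=
    not_lt.mp fun h => hinactive ⟨by omega, by omega, h⟩
  calc μ j ≤ μ (J + 1) := hμ ⟨by omega, by omega⟩ ⟨by omega, hjk⟩ hJj
    _ ≤ simplexThreshold μ J := le_simplexThreshold_of_succ hJ1 hsucc

theorem sum_Icc_max_sub_simplexThreshold (hμ : AntitoneOn μ (Set.Icc 1 k))
    (hJ : IsGreatest (activeIndices μ k) J) :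
    ∑ j ∈ Icc 1 k, max (μ j - simplexThreshold μ J) 0 = 1 := by
  have hJ1 : 1 ≤ J := hJ.1.1
  have hJk : J ≤ k := hJ.1.2.1
  rw [← sum_subset (Icc_subset_Icc_right hJk)]
  · rw [sum_congr rfl fun j hj => max_eq_left (sub_nonneg.mpr
        (simplexThreshold_lt_of_le hμ hJ (mem_Icc.mp hj).1 (mem_Icc.mp hj).2).le),
      sum_sub_distrib, sum_const, Nat.card_Icc, Nat.add_sub_cancel, nsmul_eq_mul,
      mul_simplexThreshold hJ1]
    ring
  · intro j hjk hjJ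
    simp only [mem_Icc, not_and, not_le] at hjk hjJ
    exact max_eq_right (sub_nonpos.mpr (le_simplexThreshold_of_lt hμ hJ (hjJ hjk.1) hjk.2))

end Threshold

theorem simplex_projection_soft_threshold_general
    (k : ℕ) (y : Fin k → ℝ)
    -- μ, indexed on {1,…,k}, lists the entries of y in decreasing order
    (μ : ℕ → ℝ) (σ : Equiv.Perm (Fin k))
    (hsort : ∀ i : Fin k, μ ((i : ℕ) + 1) = y (σ i))
    (hmono : ∀ i j : ℕ, 1 ≤ i → i ≤ j → j ≤ k → μ j ≤ μ i)
    (J : ℕ)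
    (hJ : IsGreatest {j : ℕ | 1 ≤ j ∧ j ≤ k ∧
      0 < μ j - (1 / (j : ℝ)) * ((∑ r ∈ Finset.Icc 1 j, μ r) - 1)} J)
    (β : ℝ) (hβ : β = (1 / (J : ℝ)) * ((∑ i ∈ Finset.Icc 1 J, μ i) - 1)) :
    (fun i : Fin k => max (y i - β) 0) ∈ stdSimplex ℝ (Fin k) ∧
    ∀ x ∈ stdSimplex ℝ (Fin k),
      ∑ i, (max (y i - β) 0 - y i) ^ 2 ≤ ∑ i, (x i - y i) ^ 2 := by
  have hμ : AntitoneOn μ (Set.Icc 1 k) := fun i hi j hj hij => hmono i j hi.1 hij hj.2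
  have hsum : ∑ i, max (y i - β) 0 = 1 := by
    rw [sum_comp_eq_sum_Icc_of_perm σ hsort fun t => max (t - β) 0, hβ]
    exact sum_Icc_max_sub_simplexThreshold hμ hJ
  exact ⟨⟨fun _ => le_max_right _ _, hsum⟩, fun x hx => sum_sq_max_sub_sub_le hsum hx⟩

/-- Projection onto the probability simplex via soft thresholding: with μ the
decreasing sort of y, J the largest index j with μ_j - (1/j)(Σ_{r≤j} μ_r - 1) > 0,
and β = (1/J)(Σ_{i≤J} μ_i - 1), the vector ŷ_i = max(y_i - β, 0) is the Euclidean
projection of y onto the simplex. -/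
theorem simplex_projection_soft_threshold
    (k : ℕ) (hk : 1 ≤ k) (y : Fin k → ℝ)
    -- μ, indexed on {1,…,k}, lists the entries of y in decreasing order
    (μ : ℕ → ℝ) (σ : Equiv.Perm (Fin k))
    (hsort : ∀ i : Fin k, μ ((i : ℕ) + 1) = y (σ i))
    (hmono : ∀ i j : ℕ, 1 ≤ i → i ≤ j → j ≤ k → μ j ≤ μ i)
    (J : ℕ)
    (hJ : IsGreatest {j : ℕ | 1 ≤ j ∧ j ≤ k ∧
      0 < μ j - (1 / (j : ℝ)) * ((∑ r ∈ Finset.Icc 1 j, μ r) - 1)} J)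
    (β : ℝ) (hβ : β = (1 / (J : ℝ)) * ((∑ i ∈ Finset.Icc 1 J, μ i) - 1)) :
    (fun i : Fin k => max (y i - β) 0) ∈ stdSimplex ℝ (Fin k) ∧
    ∀ x ∈ stdSimplex ℝ (Fin k),
      ∑ i, (max (y i - β) 0 - y i) ^ 2 ≤ ∑ i, (x i - y i) ^ 2 :=
  simplex_projection_soft_threshold_general k y μ σ hsort hmono J hJ β hβ
end
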